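/- Let (H, R) be a finite-dimensional quasitriangular Hopf algebra over a field k, u = Σ Rᵢ S(Rⁱ) its Drinfeld element, and c = u S(u). Let t be a balanced element of (H, R). Then t is a ribbon element (i.e., S(t) = t) if and only if t² · c = 1 (equivalently, t is invertible with t⁻² = c). -/

import Mathlib

open TensorProduct

noncomputable section

variable {k : Type*} [Field k] {H : Type*} [Ring H] [HopfAlgebra k H]

/-- The antipode of `H`. -/
abbrev S : H →ₗ[k] H := HopfAlgebra.antipode (R := k)

/-- `x ⊗ y ↦ x ⊗ y ⊗ 1`. -/
def iota12 : H ⊗[k] H →ₐ[k] H ⊗[k] (H ⊗[k] H) :=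
  Algebra.TensorProduct.map (AlgHom.id k H) Algebra.TensorProduct.includeLeft

/-- `x ⊗ y ↦ x ⊗ 1 ⊗ y`. -/
def iota13 : H ⊗[k] H →ₐ[k] H ⊗[k] (H ⊗[k] H) :=
  Algebra.TensorProduct.map (AlgHom.id k H) Algebra.TensorProduct.includeRight

/-- `x ⊗ y ↦ 1 ⊗ x ⊗ y`. -/
def iota23 : H ⊗[k] H →ₐ[k] H ⊗[k] (H ⊗[k] H) :=
  Algebra.TensorProduct.includeRight

/-- `R = Σ Rᵢ ⊗ Rⁱ ∈ H ⊗ H` is an R-matrix for `H`. -/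
def IsRMatrix (R : H ⊗[k] H) : Prop :=
  (∀ h : H, R * Coalgebra.comul h = (TensorProduct.comm k H H) (Coalgebra.comul h) * R) ∧
  (LinearMap.lTensor H (Coalgebra.comul (R := k)) R = iota13 R * iota12 R) ∧
  ((TensorProduct.assoc k H H H)
      (LinearMap.rTensor H (Coalgebra.comul (R := k)) R) = iota13 R * iota23 R) ∧
  ((TensorProduct.rid k H) (LinearMap.lTensor H (Coalgebra.counit (R := k)) R) = 1 ∧
    (TensorProduct.lid k H) (LinearMap.rTensor H (Coalgebra.counit (R := k)) R) = 1)

/-- The Drinfeld element `u = Σ Rᵢ S(Rⁱ)`. -/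
def drinfeldElement (R : H ⊗[k] H) : H :=
  LinearMap.mul' k H (LinearMap.lTensor H (S (k := k)) R)

/-- A balanced element of `(H, R)`: a central element `t` with `ε(t) = 1` and
`Δ(t) = (t ⊗ t) · (R₂₁ · R)`. -/
def IsBalancedElement (R : H ⊗[k] H) (t : H) : Prop :=
  (∀ h : H, t * h = h * t) ∧
  Coalgebra.counit (R := k) t = 1 ∧
  Coalgebra.comul (R := k) t = (t ⊗ₜ[k] t) * ((TensorProduct.comm k H H) R * R)

/-- The element `c = u S(u)`. -/
def cElement (R : H ⊗[k] H) : H :=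
  drinfeldElement R * S (k := k) (drinfeldElement R)

/-! The map `Y ↦ (m ↦ Σ Y₁ m S(Y₂))` from `H ⊗ H` to `End H` is multiplicative, since `S` is
an antihomomorphism, and its value at `Δ a` sends `1` to `ε(a)`. Evaluating it at `1` on both sides
of `R Δ(x) = Δᵒᵖ(x) R` gives `Σ x₂ u S(x₁) = ε(x) u`, from which coassociativity yields Drinfeld's
relation `h u = u S²(h)`; this in turn gives `Σ R² u S(R¹) = u S(u) = c`. Evaluated on
`Δ t = (t ⊗ t) R₂₁ R`, the map therefore yields `t c S(t) = ε(t) = 1`, and as `t` is central,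
`S t = t` iff `t² c = 1`. -/

open Coalgebra HopfAlgebra LinearMap

section Sandwich

variable {K A : Type*} [CommSemiring K] [Semiring A] [HopfAlgebra K A]

def antipodeSandwich : A ⊗[K] A →ₗ[K] Module.End K A :=
  TensorProduct.lift <| LinearMap.mk₂ K (fun x y => mulLeft K x ∘ₗ mulRight K (antipode K y))
    (fun _ _ _ => by ext; simp [add_mul]) (fun _ _ _ => by ext; simp)
    (fun _ _ _ => by ext; simp [mul_add]) (fun _ _ _ => by ext; simp)

@[simp]
lemma antipodeSandwich_tmul (x y m : A) :
    antipodeSandwich (x ⊗ₜ[K] y) m = x * m * antipode K y := by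
  simp [antipodeSandwich, mul_assoc]

lemma antipodeSandwich_mul (X Y : A ⊗[K] A) (m : A) :
    antipodeSandwich (X * Y) m = antipodeSandwich X (antipodeSandwich Y m) := by
  induction X with
  | zero => simp
  | add X₁ X₂ h₁ h₂ => simp [add_mul, h₁, h₂]
  | tmul x y =>
    induction Y with
    | zero => simp
    | add Y₁ Y₂ h₁ h₂ => simp_all [mul_add, add_mul]
    | tmul x' y' => simp [antipode_mul_antidistrib, mul_assoc]

lemma antipodeSandwich_comul_one (a : A) :
    antipodeSandwich (comul (R := K) a) 1 = algebraMap K A (counit a) := by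
  rw [← mul_antipode_lTensor_comul_apply]
  induction comul (R := K) a with
  | zero => simp
  | add X Y hX hY => simp [hX, hY]
  | tmul x y => simp

lemma antipodeSandwich_comm_of_mul_eq {u : A} (hu : ∀ h : A, h * u = u * antipode K (antipode K h))
    (Y : A ⊗[K] A) :
    antipodeSandwich (TensorProduct.comm K A A Y) u = u * antipode K (antipodeSandwich Y 1) := by
  induction Y with
  | zero => simp
  | add Y₁ Y₂ h₁ h₂ => simp [h₁, h₂, mul_add]
  | tmul x y => simp [hu, antipode_mul_antidistrib, mul_assoc]

end Sandwich

lemma drinfeldElement_eq_antipodeSandwich (R : H ⊗[k] H) :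
    drinfeldElement R = antipodeSandwich R 1 := by
  induction R with
  | zero => simp [drinfeldElement]
  | add X Y hX hY => simp_all [drinfeldElement]
  | tmul x y => simp [drinfeldElement]

section RMatrix

variable {R : H ⊗[k] H}
  (hR : ∀ h : H, R * comul h = TensorProduct.comm k H H (comul h) * R)
include hR

lemma antipodeSandwich_comm_comul_drinfeldElement (x : H) :
    antipodeSandwich (TensorProduct.comm k H H (comul x)) (drinfeldElement R) =
      counit (R := k) x • drinfeldElement R := by
  rw [drinfeldElement_eq_antipodeSandwich, ← antipodeSandwich_mul, ← hR, antipodeSandwich_mul,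
    antipodeSandwich_comul_one, Algebra.algebraMap_eq_smul_one, map_smul]

lemma mul_drinfeldElement (h : H) :
    h * drinfeldElement R = drinfeldElement R * S (k := k) (S (k := k) h) := by
  set u := drinfeldElement R
  let Φ : H ⊗[k] (H ⊗[k] H) →ₗ[k] H := mul' k H ∘ₗ (TensorProduct.comm k H H).toLinearMap ∘ₗ
    TensorProduct.map (S (k := k) ∘ₗ S (k := k))
      (applyₗ u ∘ₗ antipodeSandwich ∘ₗ (TensorProduct.comm k H H).toLinearMap)
  -- `Φ (x ⊗ y ⊗ z) = z u S(y) S²(x)`: the two bracketings of `Δ² h` give `u S²(h)` and `h u`.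
  have hΦ (x : H) (Y : H ⊗[k] H) :
      Φ (x ⊗ₜ Y) = antipodeSandwich (TensorProduct.comm k H H Y) u * S (k := k) (S (k := k) x) := by
    simp [Φ]
  have hΦ_assoc (X : H ⊗[k] H) (z : H) :
      Φ (TensorProduct.assoc k H H H (X ⊗ₜ z)) = z * u * S (k := k) (mul' k H (rTensor H S X)) := by
    induction X with
    | zero => simp
    | add X Y hX hY => simp [add_tmul, hX, hY, mul_add]
    | tmul x y => simp [hΦ, antipode_mul_antidistrib, mul_assoc]
  have left : Φ ∘ₗ lTensor H comul =
      mulLeft k u ∘ₗ S (k := k) ∘ₗ S (k := k) ∘ₗ (TensorProduct.rid k H).toLinearMap ∘ₗ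
        lTensor H counit := by
    ext x y
    simp [hΦ, u, antipodeSandwich_comm_comul_drinfeldElement hR]
  have right : Φ ∘ₗ (TensorProduct.assoc k H H H).toLinearMap ∘ₗ rTensor H comul =
      mulRight k u ∘ₗ (TensorProduct.lid k H).toLinearMap ∘ₗ rTensor H counit := by
    ext x y
    simp [hΦ_assoc, Algebra.algebraMap_eq_smul_one]
  calc h * u = Φ (TensorProduct.assoc k H H H (rTensor H comul (comul h))) := by
        simpa using (congr($right (comul h))).symm
    _ = Φ (lTensor H comul (comul h)) := by rw [coassoc_apply]
    _ = u * S (k := k) (S (k := k) h) := by simpa using congr($left (comul h))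

lemma antipodeSandwich_comm_drinfeldElement :
    antipodeSandwich (TensorProduct.comm k H H R) (drinfeldElement R) = cElement R := by
  rw [antipodeSandwich_comm_of_mul_eq (mul_drinfeldElement hR), cElement,
    drinfeldElement_eq_antipodeSandwich]

lemma mul_cElement_mul_antipode_eq_one {t : H} (hε : counit (R := k) t = 1)
    (hΔ : comul (R := k) t = (t ⊗ₜ[k] t) * (TensorProduct.comm k H H R * R)) :
    t * cElement R * S (k := k) t = 1 := by
  calc t * cElement R * S (k := k) t
      = antipodeSandwich ((t ⊗ₜ[k] t) * (TensorProduct.comm k H H R * R)) 1 := by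
        rw [antipodeSandwich_mul, antipodeSandwich_mul, ← drinfeldElement_eq_antipodeSandwich,
          antipodeSandwich_comm_drinfeldElement hR, antipodeSandwich_tmul]
    _ = 1 := by rw [← hΔ, antipodeSandwich_comul_one, hε, map_one]

end RMatrix

theorem ribbon_iff_sq_mul_c_eq_one_general
    (R : H ⊗[k] H) (hR : IsRMatrix R) (t : H) (ht : IsBalancedElement R t) :
    S (k := k) t = t ↔ t * t * cElement R = 1 := by
  obtain ⟨hcentral, hε, hΔ⟩ := ht
  have key := mul_cElement_mul_antipode_eq_one hR.1 hε hΔ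
  constructor
  · intro hS
    calc t * t * cElement R = t * (cElement R * t) := by rw [mul_assoc, hcentral (cElement R)]
      _ = t * cElement R * S (k := k) t := by rw [hS, mul_assoc]
      _ = 1 := key
  · intro hsq
    calc S (k := k) t = t * t * cElement R * S (k := k) t := by rw [hsq, one_mul]
      _ = t * (t * cElement R * S (k := k) t) := by simp only [mul_assoc]
      _ = t := by rw [key, mul_one]

/-- Let `(H, R)` be a finite-dimensional quasitriangular Hopf algebra over a field `k`, `u`
its Drinfeld element, `c = u S(u)`, and `t` a balanced element of `(H, R)`.  Then `t` is a
ribbon element (`S(t) = t`) if and only if `t² · c = 1` (equivalently, `t` is invertible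
with `t⁻² = c`). -/
theorem ribbon_iff_sq_mul_c_eq_one [FiniteDimensional k H]
    (R : H ⊗[k] H) (hR : IsRMatrix R) (t : H) (ht : IsBalancedElement R t) :
    S (k := k) t = t ↔ t * t * cElement R = 1 :=
  ribbon_iff_sq_mul_c_eq_one_general R hR t ht

end
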